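/- arXiv:2302.04731 — 4 statements merged into one kernel-verified Lean document; each statement's English description precedes it below -/
import Mathlib

section
/- If a hypothesis class 𝓗 ⊆ {0,1}^ℕ is CPAC learnable, then it admits a computable k-witness of VC dimension for some natural number k. -/
open Filter
open scoped ENNReal

/-- A hypothesis is a function `ℕ → Bool` (i.e. an element of `{0,1}^ℕ`). -/
abbrev Hyp := ℕ → Bool

/-- A sample is a finite sequence of labeled examples. -/
abbrev Sample := List (ℕ × Bool)

/-- A learner maps samples to hypotheses. -/
abbrev Learner := Sample → Hyp

/-- Generalization error `L_D(h) = Pr_{(x,y)∼D}[h(x) ≠ y]`. -/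
noncomputable def genError (D : PMF (ℕ × Bool)) (h : Hyp) : ℝ≥0∞ :=
  D.toOuterMeasure {p | h p.1 ≠ p.2}

/-- The distribution of `m` i.i.d. draws from `D`, as a PMF on samples of size `m`. -/
noncomputable def iidPMF (D : PMF (ℕ × Bool)) : ℕ → PMF Sample
  | 0 => PMF.pure []
  | m + 1 => D.bind fun p => (iidPMF D m).map (List.cons p)

/-- `Pr_{S ∼ D^m}[S ∈ E]`. -/
noncomputable def samplePr (D : PMF (ℕ × Bool)) (m : ℕ) (E : Set Sample) : ℝ≥0∞ :=
  (iidPMF D m).toOuterMeasure E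

/-- The PAC inequality for accuracy/confidence parameter `n` and sample size `m`:
for every distribution `D`,
`Pr_{S∼D^m}[L_D(A(S)) ≤ inf_{h∈H} L_D(h) + 1/n] ≥ 1 − 1/n`. -/
def PACCondition (A : Learner) (H : Set Hyp) (n m : ℕ) : Prop :=
  ∀ D : PMF (ℕ × Bool),
    1 - ((n : ℝ≥0∞))⁻¹ ≤
      samplePr D m {S | genError D (A S) ≤ (⨅ h ∈ H, genError D h) + ((n : ℝ≥0∞))⁻¹}

/-- `A` PAC learns `H`. -/
def PACLearns (A : Learner) (H : Set Hyp) : Prop :=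
  ∀ n : ℕ, ∃ m₀ : ℕ, ∀ m ≥ m₀, PACCondition A H n m

/-- The sample complexity of `A` w.r.t. `H`: the minimal `m₀` such that the PAC
inequality for `n` holds for all `m ≥ m₀`. -/
noncomputable def sampleComplexity (A : Learner) (H : Set Hyp) (n : ℕ) : ℕ :=
  sInf {m₀ | ∀ m ≥ m₀, PACCondition A H n m}

/-- A learner is computable if the two-argument function `(S, x) ↦ A(S)(x)` is computable
(equivalently, there is an algorithm producing from `S` a Turing machine computing the
total function `A(S)`). -/
def ComputableLearner (A : Learner) : Prop :=
  Computable₂ fun (S : Sample) (x : ℕ) => A S x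

/-- A learner is proper for `H` if it only outputs hypotheses from `H`. -/
def ProperFor (A : Learner) (H : Set Hyp) : Prop := ∀ S, A S ∈ H

/-- `H` is CPAC learnable: some computable learner PAC learns it. -/
def CPACLearnable (H : Set Hyp) : Prop :=
  ∃ A : Learner, ComputableLearner A ∧ PACLearns A H

/-- `H` is properly CPAC learnable. -/
def ProperlyCPACLearnable (H : Set Hyp) : Prop :=
  ∃ A : Learner, ComputableLearner A ∧ ProperFor A H ∧ PACLearns A H

/-- `H` is SCPAC learnable: some computable learner PAC learns it with sample complexity
bounded by a total computable function. -/
def SCPACLearnable (H : Set Hyp) : Prop :=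
  ∃ A : Learner, ComputableLearner A ∧ PACLearns A H ∧
    ∃ g : ℕ → ℕ, Computable g ∧ ∀ n, sampleComplexity A H n ≤ g n

/-- `H` is properly SCPAC learnable. -/
def ProperlySCPACLearnable (H : Set Hyp) : Prop :=
  ∃ A : Learner, ComputableLearner A ∧ ProperFor A H ∧ PACLearns A H ∧
    ∃ g : ℕ → ℕ, Computable g ∧ ∀ n, sampleComplexity A H n ≤ g n

/-- Empirical error `L_S(h) = |{i : h(x_i) ≠ y_i}| / |S|`. -/
noncomputable def empError (S : Sample) (h : Hyp) : ℝ≥0∞ :=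
  ((S.countP fun p => h p.1 != p.2 : ℕ) : ℝ≥0∞) / (S.length : ℝ≥0∞)

/-- `A` is an ERM for `H`: on every sample it outputs a hypothesis of `H` minimizing
the empirical error over `H`. -/
def IsERM (A : Learner) (H : Set Hyp) : Prop :=
  ∀ S : Sample, A S ∈ H ∧ ∀ h ∈ H, empError S (A S) ≤ empError S h

/-- `A` is an asymptotic ERM for `H`. -/
def IsAsymptoticERM (A : Learner) (H : Set Hyp) : Prop :=
  ProperFor A H ∧
  ∃ ε : ℕ → ℝ≥0∞, (∀ m, ε m ≤ 1) ∧ Tendsto ε atTop (nhds 0) ∧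
    ∀ S : Sample, empError S (A S) ≤ (⨅ h ∈ H, empError S h) + ε S.length

/-- `H` shatters the finite set `s`. -/
def Shatters (H : Set Hyp) (s : Finset ℕ) : Prop :=
  ∀ g : ℕ → Bool, ∃ h ∈ H, ∀ x ∈ s, h x = g x

/-- The VC dimension of `H` is at most `d`. -/
def VCDimAtMost (H : Set Hyp) (d : ℕ) : Prop :=
  ∀ s : Finset ℕ, Shatters H s → s.card ≤ d

/-- `H` has finite VC dimension. -/
def FiniteVCDim (H : Set Hyp) : Prop := ∃ d, VCDimAtMost H d

/-- `w` is a `k`-witness of VC dimension for `H`: on every increasing `(k+1)`-tuple it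
produces a Boolean `(k+1)`-tuple which is not the trace of any `h ∈ H` on the tuple. -/
def IsKWitness (k : ℕ) (w : List ℕ → List Bool) (H : Set Hyp) : Prop :=
  ∀ xs : List ℕ, xs.length = k + 1 → xs.Chain' (· < ·) →
    (w xs).length = k + 1 ∧ ∀ h ∈ H, xs.map h ≠ w xs

/-- The support of a hypothesis: `h⁻¹(1)`. -/
def hypSupport (h : Hyp) : Set ℕ := {x | h x = true}

/-- `h` is finitely supported. -/
def FinitelySupported (h : Hyp) : Prop := (hypSupport h).Finite

/-- The finitely supported hypothesis with support (the set of elements of) `l`. -/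
def listIndicator (l : List ℕ) : Hyp := fun x => decide (x ∈ l)

/-- A class of finitely supported hypotheses is decidable: there is an algorithm that,
given the support of a finitely supported `h` (as a list), decides whether `h ∈ H`. -/
def DecidableClass (H : Set Hyp) : Prop :=
  ∃ d : List ℕ → Bool, Computable d ∧ ∀ l : List ℕ, (d l = true ↔ listIndicator l ∈ H)

/-- `H` shatters the full binary tree of depth `d` whose node at binary path `p`
(with `|p| < d`) is labeled `t p`: every leaf (a binary path of length `d`) is reached
by some `h ∈ H`, going right at a node labeled `x` iff `h x = 1`. -/
def ShattersTree (H : Set Hyp) (d : ℕ) (t : List Bool → ℕ) : Prop :=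
  ∀ l : List Bool, l.length = d →
    ∃ h ∈ H, ∀ (i : ℕ) (hi : i < l.length), l[i] = h (t (l.take i))

/-! ### The class `𝓗_f` -/

/-- The `j`-th smallest element of the `k`-th block `I_k` of positive even numbers
(`1 ≤ j ≤ k`): `n_{kj} = k(k-1) + 2j`. -/
def nkj (k j : ℕ) : ℕ := k * (k - 1) + 2 * j

/-- The block `I_k` (of size `k`). -/
def Iblk (k : ℕ) : Finset ℕ := (Finset.Icc 1 k).image (nkj k)

/-- `h_{kj}`: the indicator of `I_k \ {n_{kj}}`. -/
def hkj (k j : ℕ) : Hyp := fun n => decide (n ∈ Iblk k ∧ n ≠ nkj k j)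

/-- `h_a`: the indicator of `I_{f(a)} ∪ {2a+1}`. -/
def hA (f : ℕ → ℕ) (a : ℕ) : Hyp := fun n => decide (n ∈ Iblk (f a) ∨ n = 2 * a + 1)

/-- The class `𝓗_f = {h_{kj} : 1 ≤ j ≤ k} ∪ {h_a : a ∈ ℕ}`. -/
def Hf (f : ℕ → ℕ) : Set Hyp :=
  {h | ∃ k j, 1 ≤ j ∧ j ≤ k ∧ h = hkj k j} ∪ {h | ∃ a, h = hA f a}

/-! ### Good hypotheses w.r.t. a witness -/

/-- `h` is good w.r.t. the `k`-witness `w`: it has finite support and disagrees with `w`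
on every increasing `(k+1)`-tuple lying strictly below `max supp(h)`. -/
def IsGood (k : ℕ) (w : List ℕ → List Bool) (h : Hyp) : Prop :=
  FinitelySupported h ∧
  ∀ xs : List ℕ, xs.length = k + 1 → xs.Chain' (· < ·) →
    (∀ x ∈ xs, x < sSup (hypSupport h)) → xs.map h ≠ w xs

/-- The set of good hypotheses w.r.t. `w`. -/
def Hgood (k : ℕ) (w : List ℕ → List Bool) : Set Hyp := {h | IsGood k w h}

/-!
Fix accuracy and confidence `1/10` and let `m` be a matching sample size of the learner `A`.
For `N = 2 ^ (10 * m + 5)` points `xs`, counting produces a labeling `T` of `xs` that is hard for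
`A`: after any `m` examples drawn from `T`, the output of `A` errs on more than a tenth of `T`.
Indeed there are only `(2N)^m` such samples, while each output is within Hamming distance `N/10`
of at most `3^N / 2^(9N/10)` of the `2^N` labelings. If some `h ∈ H` realized `T`, the PAC
guarantee for the uniform distribution on `T` would give a sample after which `A` errs on at most
a tenth of `T`. So the first hard labeling of `xs`, found by exhaustive search, is a witness, and
the search is computable because `A` is.
-/

open Finset

namespace Computable

variable {α β σ : Type*} [Primcodable α] [Primcodable β] [Primcodable σ]

theorem list_map {f : α → List β} {g : α → β → σ} (hf : Computable f) (hg : Computable₂ g) :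
    Computable fun a => (f a).map (g a) := by
  have step : Computable₂ fun a (p : ℕ × List σ) => p.2 ++ ((f a)[p.1]?.map (g a)).toList := by
    refine list_append.comp (snd.comp snd) ?_
    refine (option_casesOn (list_getElem?.comp (hf.comp fst) (fst.comp snd)) (const [])
      (list_cons.comp (hg.comp (fst.comp fst) snd) (const [])).to₂).of_eq fun p => ?_
    cases (f p.1)[p.2.1]? <;> rfl
  refine (nat_rec (list_length.comp hf) (const []) step).of_eq fun a => ?_
  suffices ∀ n, Nat.rec [] (fun i acc => acc ++ ((f a)[i]?.map (g a)).toList) n =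
      ((f a).take n).map (g a) by simpa using this (f a).length
  intro n
  induction n with
  | zero => rfl
  | succ n ih => cases h : (f a)[n]? <;> simp [ih, List.take_add_one, h]

theorem list_all {f : α → List β} {p : α → β → Bool} (hf : Computable f) (hp : Computable₂ p) :
    Computable fun a => (f a).all (p a) := by
  have : Primrec fun l : List Bool => l.all id :=
    (Primrec.list_foldr Primrec.id (Primrec.const true)
      ((Primrec.dom_bool₂ (· && ·)).comp (Primrec.fst.comp Primrec.snd)
        (Primrec.snd.comp Primrec.snd)).to₂).of_eq fun l => by induction l <;> simp_all
  exact (this.to_comp.comp (list_map hf hp)).of_eq fun a => by simp [List.all_map]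

theorem list_countP {f : α → List β} {p : α → β → Bool} (hf : Computable f)
    (hp : Computable₂ p) : Computable fun a => (f a).countP (p a) := by
  have : Primrec fun l : List Bool => l.countP id :=
    (Primrec.list_foldr Primrec.id (Primrec.const 0)
      (Primrec.cond (Primrec.fst.comp Primrec.snd)
        (Primrec.succ.comp (Primrec.snd.comp Primrec.snd))
        (Primrec.snd.comp Primrec.snd)).to₂).of_eq fun l => by
      induction l with
      | nil => rfl
      | cons b l ih => cases b <;> simp_all
  exact (this.to_comp.comp (list_map hf hp)).of_eq fun a => by simp [List.countP_map]

theorem list_find? {f : α → List β} {p : α → β → Bool} (hf : Computable f)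
    (hp : Computable₂ p) : Computable fun a => (f a).find? (p a) := by
  have : Primrec fun l : List Bool => l.findIdx id :=
    Primrec.list_findIdx Primrec.id Primrec.snd.to₂
  exact (list_getElem?.comp hf (this.to_comp.comp (list_map hf hp))).of_eq fun a => by
    simp [List.find?_eq_getElem?_findIdx, List.findIdx_map]

end Computable

theorem Primrec.list_sections {α : Type*} [Primcodable α] : Primrec (@List.sections α) := by
  refine (Primrec.list_foldr Primrec.id (Primrec.const [[]])
    (Primrec.list_flatMap (Primrec.snd.comp Primrec.snd)
      (Primrec.list_map (Primrec.fst.comp (Primrec.snd.comp Primrec.fst))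
        (Primrec.list_cons.comp Primrec.snd (Primrec.snd.comp Primrec.fst)).to₂).to₂).to₂).of_eq
    fun L => ?_
  induction L with
  | nil => rfl
  | cons l L ih => simp_all [List.sections]

theorem List.mem_sections_replicate {α : Type*} {l S : List α} {m : ℕ} :
    S ∈ (List.replicate m l).sections ↔ S.length = m ∧ ∀ a ∈ S, a ∈ l := by
  rw [List.mem_sections]
  induction S generalizing m with
  | nil => cases m <;> simp
  | cons a S ih => cases m <;> simp [List.replicate_succ, ih, and_left_comm]

theorem List.countP_ofFn {α : Type*} {n : ℕ} (f : Fin n → α) (p : α → Bool) :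
    (List.ofFn f).countP p = #{i | p (f i)} := by
  induction n with
  | zero => simp
  | succ n ih =>
    rw [List.ofFn_succ, List.countP_cons, ih, card_filter, card_filter, Fin.sum_univ_succ,
      add_comm]

theorem List.tsum_count {α : Type*} [DecidableEq α] (l : List α) :
    ∑' a, (l.count a : ℝ≥0∞) = l.length := by
  rw [tsum_eq_sum (s := l.toFinset) fun a ha => by simpa [List.count_eq_zero] using ha,
    ← Nat.cast_sum, List.sum_toFinset_count_eq_length]

theorem card_filter_hammingDist_le {ι : Type*} [Fintype ι] [DecidableEq ι] (u : ι → Bool)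
    (t : ℕ) : #{b | hammingDist u b ≤ t} ≤ ∑ j ∈ range (t + 1), (Fintype.card ι).choose j := by
  calc #{b | hammingDist u b ≤ t}
      ≤ #((range (t + 1)).biUnion fun j => powersetCard j (univ : Finset ι)) := by
        refine card_le_card_of_injOn (fun b => ({i | u i ≠ b i} : Finset ι)) (fun b hb => ?_)
          fun b₁ _ b₂ _ h => funext fun i => ?_
        · simp only [coe_filter, mem_univ, true_and, Set.mem_ofPred_eq] at hb
          simp only [coe_biUnion, coe_range, Set.mem_iUnion, Set.mem_Iio, mem_coe,
            mem_powersetCard, subset_univ, true_and]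
          exact ⟨_, Nat.lt_succ_of_le hb, rfl⟩
        · have := congrArg (i ∈ ·) h
          simp only [mem_filter, mem_univ, true_and, eq_iff_iff] at this
          revert this
          cases u i <;> cases b₁ i <;> cases b₂ i <;> simp
    _ ≤ ∑ j ∈ range (t + 1), #(powersetCard j (univ : Finset ι)) := card_biUnion_le
    _ = ∑ j ∈ range (t + 1), (Fintype.card ι).choose j := by simp [card_powersetCard]

theorem exists_forall_lt_hammingDist {ι κ : Type*} [Fintype ι] [DecidableEq ι] [Fintype κ]
    (u : κ → ι → Bool) (t : ℕ)
    (h : Fintype.card κ * ∑ j ∈ range (t + 1), (Fintype.card ι).choose j < 2 ^ Fintype.card ι) :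
    ∃ b, ∀ k, t < hammingDist (u k) b := by
  by_contra! hclose
  have hcover : (univ : Finset (ι → Bool)) ⊆ univ.biUnion fun k => {b | hammingDist (u k) b ≤ t} :=
    fun b _ => by simpa using hclose b
  refine h.not_ge ?_
  calc 2 ^ Fintype.card ι = #(univ : Finset (ι → Bool)) := by simp
    _ ≤ ∑ k, #{b | hammingDist (u k) b ≤ t} := (card_le_card hcover).trans card_biUnion_le
    _ ≤ ∑ _k : κ, ∑ j ∈ range (t + 1), (Fintype.card ι).choose j :=
        sum_le_sum fun k _ => card_filter_hammingDist_le (u k) t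
    _ = _ := by simp

theorem sum_choose_mul_two_pow_le {N t : ℕ} (ht : t ≤ N) :
    (∑ j ∈ range (t + 1), N.choose j) * 2 ^ (N - t) ≤ 3 ^ N := by
  calc (∑ j ∈ range (t + 1), N.choose j) * 2 ^ (N - t)
      ≤ ∑ j ∈ range (t + 1), N.choose j * 2 ^ (N - j) := by
        rw [sum_mul]
        exact sum_le_sum fun j hj => by
          gcongr
          · norm_num
          · have := mem_range.mp hj; omega
    _ ≤ ∑ j ∈ range (N + 1), N.choose j * 2 ^ (N - j) :=
        sum_le_sum_of_subset (range_subset_range.mpr (by omega))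
    _ = 3 ^ N := by
        rw [show 3 = 1 + 2 by rfl, add_pow]
        simp [mul_comm]

theorem two_mul_pow_mul_three_pow_lt (m : ℕ) :
    (2 * 2 ^ (10 * m + 5)) ^ m * 3 ^ 2 ^ (10 * m + 5) <
      2 ^ 2 ^ (10 * m + 5) * 2 ^ (2 ^ (10 * m + 5) - 2 ^ (10 * m + 5) / 10) := by
  set s := 10 * m + 5
  set N := 2 ^ s
  have hsq : 25 * m ^ 2 ≤ 2 ^ (10 * m) := by
    calc 25 * m ^ 2 = (5 * m) ^ 2 := by ring
      _ ≤ (2 ^ (5 * m)) ^ 2 := Nat.pow_le_pow_left Nat.lt_two_pow_self.le 2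
      _ = 2 ^ (10 * m) := by rw [← pow_mul]; ring_nf
  have hexp : (s + 1) * m * 10 + 16 * N < 19 * N := by
    have hN : N = 32 * 2 ^ (10 * m) := by simp only [N, s, pow_add]; ring
    rw [hN]
    simp only [s]
    nlinarith [Nat.one_le_two_pow (n := 10 * m)]
  rw [← Nat.pow_lt_pow_iff_left (by norm_num : 10 ≠ 0)]
  -- `3 ^ 10 ≤ 2 ^ 16` leaves the slack `2 ^ (3 * N)` that absorbs the number of samples
  calc ((2 * N) ^ m * 3 ^ N) ^ 10 = 2 ^ ((s + 1) * m * 10) * (3 ^ 10) ^ N := by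
        rw [mul_pow, pow_right_comm 3, ← pow_succ', ← pow_mul, ← pow_mul, ← mul_assoc]
    _ ≤ 2 ^ ((s + 1) * m * 10) * (2 ^ 16) ^ N :=
        Nat.mul_le_mul_left _ (Nat.pow_le_pow_left (by norm_num) N)
    _ = 2 ^ ((s + 1) * m * 10 + 16 * N) := by rw [← pow_mul, pow_add]
    _ < 2 ^ (19 * N) := Nat.pow_lt_pow_right (by norm_num) hexp
    _ ≤ 2 ^ ((N + (N - N / 10)) * 10) := Nat.pow_le_pow_right (by norm_num) (by omega)
    _ = (2 ^ N * 2 ^ (N - N / 10)) ^ 10 := by rw [pow_mul, pow_add]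

theorem two_mul_pow_mul_sum_choose_lt (m : ℕ) {N : ℕ} (hN : N = 2 ^ (10 * m + 5)) :
    (2 * N) ^ m * ∑ j ∈ range (N / 10 + 1), N.choose j < 2 ^ N := by
  refine Nat.lt_of_mul_lt_mul_right (a := 2 ^ (N - N / 10)) ?_
  calc (2 * N) ^ m * (∑ j ∈ range (N / 10 + 1), N.choose j) * 2 ^ (N - N / 10)
      ≤ (2 * N) ^ m * 3 ^ N := by
        rw [mul_assoc]
        exact Nat.mul_le_mul_left _ (sum_choose_mul_two_pow_le (Nat.div_le_self N 10))
    _ < 2 ^ N * 2 ^ (N - N / 10) := by rw [hN]; exact two_mul_pow_mul_three_pow_lt m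

def mistakes (h : Hyp) (T : Sample) : ℕ := T.countP fun p => h p.1 != p.2

theorem genError_ofMultiset (T : Sample) (hT : (T : Multiset (ℕ × Bool)) ≠ 0) (h : Hyp) :
    genError (PMF.ofMultiset T hT) h = mistakes h T / T.length := by
  rw [genError, PMF.toOuterMeasure_ofMultiset_apply, Multiset.coe_card, Multiset.filter_coe]
  simp only [Multiset.coe_count, List.tsum_count, mistakes, List.countP_eq_length_filter]
  congr 3
  exact List.filter_congr fun ⟨x, y⟩ _ => by cases hx : h x <;> cases y <;> simp [hx]

theorem length_eq_and_mem_support_of_mem_support_iidPMF {D : PMF (ℕ × Bool)} {m : ℕ}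
    {S : Sample} (hS : S ∈ (iidPMF D m).support) : S.length = m ∧ ∀ p ∈ S, p ∈ D.support := by
  induction m generalizing S with
  | zero => simp_all [iidPMF]
  | succ m ih =>
    simp only [iidPMF, PMF.support_bind, PMF.support_map, Set.mem_iUnion, Set.mem_image] at hS
    obtain ⟨p, hp, S, hS, rfl⟩ := hS
    obtain ⟨hlen, hmem⟩ := ih hS
    simp_all

theorem PACCondition.exists_sample_mistakes_le {A : Learner} {H : Set Hyp} {n m : ℕ}
    (hPAC : PACCondition A H n m) (hn : 1 < n) {T : Sample} (hT : T ≠ []) {h : Hyp}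
    (hH : h ∈ H) (hTh : ∀ p ∈ T, h p.1 = p.2) :
    ∃ S ∈ (List.replicate m T).sections, n * mistakes (A S) T ≤ T.length := by
  set D := PMF.ofMultiset (T : Multiset (ℕ × Bool)) (by simpa using hT)
  have hmin : ⨅ g ∈ H, genError D g = 0 := by
    refine le_antisymm ((iInf₂_le h hH).trans_eq ?_) zero_le
    rw [genError_ofMultiset, mistakes, List.countP_eq_zero.mpr fun p hp => by simp [hTh p hp]]
    simp
  have hpos : samplePr D m {S | genError D (A S) ≤ (n : ℝ≥0∞)⁻¹} ≠ 0 := by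
    have hconf := hPAC D
    rw [hmin] at hconf
    simp only [zero_add] at hconf
    refine (lt_of_lt_of_le ?_ hconf).ne'
    exact tsub_pos_of_lt (ENNReal.inv_lt_one.mpr (by exact_mod_cast hn))
  obtain ⟨S, hSD, hSA⟩ := Set.not_disjoint_iff.mp
    ((PMF.toOuterMeasure_apply_eq_zero_iff _ _).not.mp hpos)
  obtain ⟨hlen, hmem⟩ := length_eq_and_mem_support_of_mem_support_iidPMF hSD
  refine ⟨S, List.mem_sections_replicate.mpr ⟨hlen, fun p hp => by simpa [D] using hmem p hp⟩, ?_⟩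
  have hT0 : (T.length : ℝ≥0∞) ≠ 0 := Nat.cast_ne_zero.mpr (by simpa using hT)
  rw [Set.mem_ofPred_eq, genError_ofMultiset, ENNReal.div_le_iff hT0 (by simp)] at hSA
  have hle : (n : ℝ≥0∞) * mistakes (A S) T ≤ T.length :=
    calc (n : ℝ≥0∞) * mistakes (A S) T ≤ n * ((n : ℝ≥0∞)⁻¹ * T.length) := by gcongr
      _ ≤ T.length := by
        rw [← mul_assoc]
        exact mul_le_of_le_one_left zero_le (ENNReal.mul_inv_le_one _)
  exact_mod_cast hle

def IsHardSample (A : Learner) (n m : ℕ) (T : Sample) : Prop :=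
  ∀ S ∈ (List.replicate m T).sections, T.length < n * mistakes (A S) T

instance (A : Learner) (n m : ℕ) : DecidablePred (IsHardSample A n m) :=
  fun _ => inferInstanceAs (Decidable (∀ _ ∈ _, _))

def labelings (xs : List ℕ) : List Sample := (xs.map fun x => [(x, false), (x, true)]).sections

theorem mem_labelings {xs : List ℕ} {T : Sample} : T ∈ labelings xs ↔ T.map Prod.fst = xs := by
  have hmem (p : ℕ × Bool) (x : ℕ) : p ∈ [(x, false), (x, true)] ↔ p.1 = x := by
    obtain ⟨y, b⟩ := p
    cases b <;> simp [eq_comm]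
  rw [labelings, List.mem_sections, List.forall₂_map_right_iff, ← List.forall₂_eq_eq_eq,
    List.forall₂_map_left_iff]
  simp only [hmem]

theorem exists_isHardSample_mem_labelings (A : Learner) (m : ℕ) {xs : List ℕ}
    (hxs : xs.length = 2 ^ (10 * m + 5)) : ∃ T ∈ labelings xs, IsHardSample A 10 m T := by
  set N := xs.length
  let sampleOf (κ : Fin m → Fin N × Bool) : Sample :=
    List.ofFn fun r => (xs.get (κ r).1, (κ r).2)
  have hcount : Fintype.card (Fin m → Fin N × Bool) *
      ∑ j ∈ range (N / 10 + 1), (Fintype.card (Fin N)).choose j < 2 ^ Fintype.card (Fin N) := by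
    simpa [mul_comm N 2] using two_mul_pow_mul_sum_choose_lt m hxs
  obtain ⟨b, hb⟩ :=
    exists_forall_lt_hammingDist (fun κ i => A (sampleOf κ) (xs.get i)) (N / 10) hcount
  refine ⟨List.ofFn fun i => (xs.get i, b i),
    mem_labelings.mpr (by simp [List.map_ofFn, Function.comp_def]), fun S hS => ?_⟩
  obtain ⟨hlen, hmem⟩ := List.mem_sections_replicate.mp hS
  have hentry (r : Fin m) : ∃ i : Fin N, (xs.get i, b i) = S[r] :=
    List.mem_ofFn.mp (hmem _ (List.getElem_mem _))
  choose ι hι using hentry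
  have hSκ : S = sampleOf fun r => (ι r, b (ι r)) :=
    List.ext_getElem (by simp [sampleOf, hlen]) fun r h₁ _ => by
      simpa [sampleOf] using (hι ⟨r, hlen ▸ h₁⟩).symm
  have hdist := hb fun r => (ι r, b (ι r))
  rw [← hSκ] at hdist
  have hmistakes : mistakes (A S) (List.ofFn fun i => (xs.get i, b i)) =
      hammingDist (fun i => A S (xs.get i)) b := by
    rw [mistakes, List.countP_ofFn]
    simp [hammingDist]
  rw [List.length_ofFn, hmistakes]
  omega

-- `[]` is never returned for lists of length `2 ^ (10 * m + 5)`, see `exists_hardLabeling_eq`.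
def hardLabeling (A : Learner) (n m : ℕ) (xs : List ℕ) : List Bool :=
  (((labelings xs).find? fun T => decide (IsHardSample A n m T)).getD []).map Prod.snd

theorem computable_hardLabeling {A : Learner} (hA : ComputableLearner A) (n m : ℕ) :
    Computable (hardLabeling A n m) := by
  have hlabelings : Primrec labelings :=
    Primrec.list_sections.comp (Primrec.list_map Primrec.id
      (Primrec.list_cons.comp (Primrec.pair Primrec.snd (Primrec.const false))
        (Primrec.list_cons.comp (Primrec.pair Primrec.snd (Primrec.const true))
          (Primrec.const []))).to₂)
  have hmistakes : Computable₂ fun (T S : Sample) => mistakes (A S) T :=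
    Computable.list_countP Computable.fst
      ((Primrec.dom_bool₂ (· != ·)).to_comp.comp
        (hA.comp (Computable.snd.comp Computable.fst) (Computable.fst.comp Computable.snd))
        (Computable.snd.comp Computable.snd)).to₂
  have hhard : Computable fun T => decide (IsHardSample A n m T) := by
    refine (Computable.list_all
      (Primrec.list_sections.comp
        ((Primrec.list_ofFn fun _ => Primrec.id).of_eq fun T => List.ofFn_const m T)).to_comp
      (Primrec.nat_lt.decide.to_comp.comp (Computable.list_length.comp Computable.fst)
        (Primrec.nat_mul.to_comp.comp (Computable.const n) hmistakes)).to₂).of_eq fun T => ?_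
    simp only [List.all_eq, IsHardSample]
    exact decide_eq_decide.mpr (by simp only [decide_eq_true_eq])
  exact Computable.list_map
    (Computable.option_getD
      (Computable.list_find? hlabelings.to_comp (hhard.comp Computable.snd).to₂)
      (Computable.const []))
    (Computable.snd.comp Computable.snd).to₂

theorem exists_hardLabeling_eq (A : Learner) (m : ℕ) {xs : List ℕ}
    (hxs : xs.length = 2 ^ (10 * m + 5)) :
    ∃ T ∈ labelings xs, IsHardSample A 10 m T ∧ hardLabeling A 10 m xs = T.map Prod.snd := by
  obtain ⟨T₀, hT₀, hhard₀⟩ := exists_isHardSample_mem_labelings A m hxs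
  have hsome : ((labelings xs).find? fun T => decide (IsHardSample A 10 m T)).isSome :=
    List.find?_isSome.mpr ⟨T₀, hT₀, decide_eq_true hhard₀⟩
  obtain ⟨T, hfind⟩ := Option.isSome_iff_exists.mp hsome
  exact ⟨T, List.mem_of_find?_eq_some hfind,
    of_decide_eq_true (List.find?_some (p := fun T => decide (IsHardSample A 10 m T)) hfind),
    by rw [hardLabeling, hfind, Option.getD_some]⟩

theorem isKWitness_hardLabeling {A : Learner} {H : Set Hyp} {m : ℕ}
    (hPAC : PACCondition A H 10 m) :
    IsKWitness (2 ^ (10 * m + 5) - 1) (hardLabeling A 10 m) H := by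
  intro xs hlen _
  have hxs : xs.length = 2 ^ (10 * m + 5) := by
    have := Nat.one_le_two_pow (n := 10 * m + 5)
    omega
  obtain ⟨T, hT, hhard, hw⟩ := exists_hardLabeling_eq A m hxs
  have hfst := mem_labelings.mp hT
  have hTlen : T.length = xs.length := by rw [← hfst, List.length_map]
  refine ⟨by rw [hw, List.length_map, hTlen, hlen], fun h hH heq => ?_⟩
  have hlabel : ∀ p ∈ T, h p.1 = p.2 := by
    rw [hw, ← hfst, List.map_map] at heq
    exact List.map_inj_left.mp heq
  have hne : T ≠ [] := List.ne_nil_of_length_pos (by rw [hTlen, hxs]; exact Nat.two_pow_pos _)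
  obtain ⟨S, hS, hle⟩ := hPAC.exists_sample_mistakes_le (by norm_num) hne hH hlabel
  exact (hhard S hS).not_ge hle

/-- If `H` is CPAC learnable, then it admits a computable `k`-witness
of VC dimension for some natural number `k`. -/
theorem computable_witness_of_CPAC (H : Set Hyp) (hH : CPACLearnable H) :
    ∃ k : ℕ, ∃ w : List ℕ → List Bool, Computable w ∧ IsKWitness k w H := by
  obtain ⟨A, hA, hlearn⟩ := hH
  obtain ⟨m, hm⟩ := hlearn 10
  exact ⟨_, hardLabeling A 10 m, computable_hardLabeling hA 10 m,
    isKWitness_hardLabeling (hm m le_rfl)⟩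
end

section
/- Let f : ℕ → ℕ be a total computable injective function. Then the hypothesis class 𝓗_f is decidable: there is an algorithm that, given the (finite) support of a finitely supported function h : ℕ → {0,1}, decides whether h ∈ 𝓗_f. -/
open Filter
open scoped ENNReal

/-!
A finitely supported hypothesis is handed over as a list `l`, and whether `listIndicator l`
equals the indicator of another explicit list is a primitive recursive test (two inclusions).
If `l` describes `h_{kj}`, it has at least `k - 1` distinct elements, so only the blocks
`k < |l| + 2` need to be tried. If it describes `h_a`, then `2a+1` is its only odd element,
because the blocks consist of even numbers; so `a` is read off `l`, and a single computation
of `f a` settles membership.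
-/

open Primrec

theorem ComputablePred.or {α : Type*} [Primcodable α] {p q : α → Prop} :
    ComputablePred p → ComputablePred q → ComputablePred fun a => p a ∨ q a
  | ⟨_, hp⟩, ⟨_, hq⟩ =>
    Computable.computablePred <| (Primrec.or.to_comp.comp hp hq).of_eq <| by simp

theorem PrimrecRel.exists_lt' {α : Type*} [Primcodable α] {R : ℕ → α → Prop}
    (hR : PrimrecRel R) : PrimrecRel fun n a => ∃ x < n, R x a :=
  ((PrimrecRel.exists_mem_list hR).comp (list_range.comp fst) snd).of_eq fun _ => by
    simp only [List.mem_range]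

theorem Primrec.list_mem {α : Type*} [Primcodable α] :
    PrimrecRel fun (a : α) (l : List α) => a ∈ l :=
  ((PrimrecRel.exists_mem_list Primrec.eq).comp snd fst).of_eq fun _ => by simp

theorem Primrec.list_subset {α : Type*} [Primcodable α] :
    PrimrecRel fun l l' : List α => l ⊆ l' :=
  (PrimrecRel.forall_mem_list Primrec.list_mem).of_eq fun _ _ => Iff.rfl

theorem listIndicator_eq_listIndicator_iff {l l' : List ℕ} :
    listIndicator l = listIndicator l' ↔ l ⊆ l' ∧ l' ⊆ l := by
  simp only [funext_iff, listIndicator, decide_eq_decide]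
  exact ⟨fun h => ⟨fun x => (h x).1, fun x => (h x).2⟩, fun h x => ⟨@h.1 x, @h.2 x⟩⟩

theorem PrimrecRel.computablePred_comp {α β γ : Type*} [Primcodable α] [Primcodable β]
    [Primcodable γ] {R : β → γ → Prop} (hR : PrimrecRel R) {f : α → β} {g : α → γ}
    (hf : Computable f) (hg : Computable g) : ComputablePred fun a => R (f a) (g a) := by
  obtain ⟨_, h⟩ := hR
  exact ⟨fun a => inferInstanceAs (Decidable (R (f a, g a).1 (f a, g a).2)),
    h.to_comp.comp (hf.pair hg)⟩

theorem primrecRel_listIndicator_eq :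
    PrimrecRel fun l l' : List ℕ => listIndicator l = listIndicator l' :=
  (Primrec.list_subset.and Primrec.list_subset.swap).of_eq fun _ =>
    listIndicator_eq_listIndicator_iff.symm

theorem decidableClass_iff_computablePred {H : Set Hyp} :
    DecidableClass H ↔ ComputablePred fun l => listIndicator l ∈ H := by
  rw [ComputablePred.computable_iff, DecidableClass]
  refine exists_congr fun d => and_congr_right fun _ => ?_
  exact ⟨fun h => funext fun l => propext (h l).symm,
    fun h l => (iff_of_eq (congrFun h l)).symm⟩

theorem DecidableClass.union {H₁ H₂ : Set Hyp} (h₁ : DecidableClass H₁)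
    (h₂ : DecidableClass H₂) : DecidableClass (H₁ ∪ H₂) := by
  rw [decidableClass_iff_computablePred] at *
  exact h₁.or h₂

def blockList (k : ℕ) : List ℕ := (List.range k).map fun i => nkj k (i + 1)

theorem nkj_injective (k : ℕ) : Function.Injective (nkj k) := fun _ _ h => by
  unfold nkj at h; omega

theorem mem_blockList {k n : ℕ} : n ∈ blockList k ↔ n ∈ Iblk k := by
  simp only [blockList, Iblk, List.mem_map, List.mem_range, Finset.mem_image, Finset.mem_Icc]
  constructor
  · rintro ⟨i, hi, rfl⟩
    exact ⟨i + 1, ⟨by omega, hi⟩, rfl⟩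
  · rintro ⟨j, ⟨hj, hjk⟩, rfl⟩
    exact ⟨j - 1, by omega, by rw [Nat.sub_add_cancel hj]⟩

theorem nodup_blockList (k : ℕ) : (blockList k).Nodup :=
  List.nodup_range.map ((nkj_injective k).comp (add_left_injective 1))

theorem length_blockList (k : ℕ) : (blockList k).length = k := by
  simp [blockList]

theorem even_of_mem_Iblk {k n : ℕ} (h : n ∈ Iblk k) : n % 2 = 0 := by
  obtain ⟨j, -, rfl⟩ := Finset.mem_image.1 h
  obtain ⟨m, hm⟩ := Nat.even_mul_pred_self k
  unfold nkj
  omega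

theorem hkj_eq_listIndicator (k j : ℕ) :
    hkj k j = listIndicator ((blockList k).erase (nkj k j)) := by
  funext n
  simp [hkj, listIndicator, (nodup_blockList k).mem_erase_iff, mem_blockList, and_comm]

theorem hA_eq_listIndicator (f : ℕ → ℕ) (a : ℕ) :
    hA f a = listIndicator ((2 * a + 1) :: blockList (f a)) := by
  funext n
  simp [hA, listIndicator, mem_blockList, or_comm]

theorem primrec_nkj : Primrec₂ nkj :=
  nat_add.comp₂
    (nat_mul.comp₂ Primrec₂.left (nat_sub.comp₂ Primrec₂.left (Primrec₂.const 1)))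
    (nat_mul.comp₂ (Primrec₂.const 2) Primrec₂.right)

theorem primrec_blockList : Primrec blockList :=
  list_map list_range (primrec_nkj.comp₂ Primrec₂.left (succ.comp₂ Primrec₂.right))

theorem primrec_blockList_erase : Primrec₂ fun k j => (blockList k).erase (nkj k j) :=
  ((PrimrecRel.listFilter (R := fun a b : ℕ => a ≠ b) Primrec.eq.not).comp₂
    (primrec_blockList.comp₂ Primrec₂.left) primrec_nkj).of_eq fun k j => by
      rw [(nodup_blockList k).erase_eq_filter]
      simp only [bne, beq_eq_decide, decide_not]

theorem length_lt_of_listIndicator_eq_hkj {l : List ℕ} {k j : ℕ} (hj : 1 ≤ j) (hjk : j ≤ k)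
    (h : listIndicator l = hkj k j) : k < l.length + 2 := by
  rw [hkj_eq_listIndicator, listIndicator_eq_listIndicator_iff] at h
  have hmem : nkj k j ∈ blockList k :=
    mem_blockList.2 (Finset.mem_image_of_mem _ (Finset.mem_Icc.2 ⟨hj, hjk⟩))
  have hle := ((nodup_blockList k).erase _).length_le_of_subset h.2
  rw [List.length_erase_of_mem hmem, length_blockList] at hle
  omega

theorem listIndicator_mem_hkj_iff {l : List ℕ} :
    listIndicator l ∈ {h | ∃ k j, 1 ≤ j ∧ j ≤ k ∧ h = hkj k j} ↔
      ∃ k < l.length + 2, ∃ i < k,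
        listIndicator l = listIndicator ((blockList k).erase (nkj k (i + 1))) := by
  constructor
  · rintro ⟨k, j, hj, hjk, h⟩
    refine ⟨k, length_lt_of_listIndicator_eq_hkj hj hjk h, j - 1, by omega, ?_⟩
    rw [Nat.sub_add_cancel hj, h, hkj_eq_listIndicator]
  · rintro ⟨k, -, i, hi, h⟩
    exact ⟨k, i + 1, by omega, hi, h.trans (hkj_eq_listIndicator k (i + 1)).symm⟩

theorem decidableClass_hkj : DecidableClass {h | ∃ k j, 1 ≤ j ∧ j ≤ k ∧ h = hkj k j} := by
  have hinner : PrimrecRel fun (i : ℕ) (p : ℕ × List ℕ) =>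
      listIndicator p.2 = listIndicator ((blockList p.1).erase (nkj p.1 (i + 1))) :=
    primrecRel_listIndicator_eq.comp (snd.comp snd)
      (primrec_blockList_erase.comp (fst.comp snd) (succ.comp fst))
  have hk : PrimrecRel fun (k : ℕ) (l : List ℕ) =>
      ∃ i < k, listIndicator l = listIndicator ((blockList k).erase (nkj k (i + 1))) :=
    hinner.exists_lt'.comp fst Primrec.id
  have hsearch : PrimrecPred fun l : List ℕ => ∃ k < l.length + 2,
      ∃ i < k, listIndicator l = listIndicator ((blockList k).erase (nkj k (i + 1))) :=
    hk.exists_lt'.comp (nat_add.comp list_length (const 2)) Primrec.id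
  rw [decidableClass_iff_computablePred]
  exact hsearch.computablePred.of_eq fun _ => listIndicator_mem_hkj_iff.symm

def firstOdd (l : List ℕ) : ℕ := (l.filter fun x => x % 2 = 1).headI

theorem firstOdd_eq {l : List ℕ} {x : ℕ} (hx : x ∈ l) (hodd : x % 2 = 1)
    (huniq : ∀ y ∈ l, y % 2 = 1 → y = x) : firstOdd l = x := by
  have hmem : x ∈ l.filter fun x => x % 2 = 1 := List.mem_filter.2 ⟨hx, by simpa using hodd⟩
  obtain ⟨y, t, hfil⟩ := List.exists_cons_of_ne_nil (List.ne_nil_of_mem hmem)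
  have hy : y ∈ l.filter fun x => x % 2 = 1 := hfil ▸ List.mem_cons_self
  rw [List.mem_filter] at hy
  rw [firstOdd, hfil, List.headI_cons]
  exact huniq y hy.1 (by simpa using hy.2)

theorem listIndicator_mem_hA_iff {f : ℕ → ℕ} {l : List ℕ} :
    listIndicator l ∈ {h | ∃ a, h = hA f a} ↔ listIndicator l = hA f (firstOdd l / 2) := by
  refine ⟨?_, fun h => ⟨_, h⟩⟩
  rintro ⟨a, h⟩
  have hl : ∀ y, y ∈ l ↔ y ∈ Iblk (f a) ∨ y = 2 * a + 1 := fun y => by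
    have hy := congrFun h y
    simp only [listIndicator, hA, decide_eq_decide] at hy
    exact hy
  have hodd : firstOdd l = 2 * a + 1 := by
    refine firstOdd_eq ((hl _).2 (Or.inr rfl)) (by omega) fun y hy hyodd => ?_
    rcases (hl y).1 hy with hy | rfl
    · have := even_of_mem_Iblk hy
      omega
    · rfl
  rwa [hodd, show (2 * a + 1) / 2 = a by omega]

theorem decidableClass_hA {f : ℕ → ℕ} (hf : Computable f) :
    DecidableClass {h | ∃ a, h = hA f a} := by
  rw [decidableClass_iff_computablePred]
  have ha : Primrec fun l => firstOdd l / 2 :=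
    nat_div.comp (list_headI.comp (Primrec.listFilter
      (Primrec.eq.comp (nat_mod.comp Primrec.id (const 2)) (const 1)))) (const 2)
  have hsupp : Computable fun l => (2 * (firstOdd l / 2) + 1) :: blockList (f (firstOdd l / 2)) :=
    list_cons.to_comp.comp (succ.comp (nat_mul.comp (const 2) ha)).to_comp
      (primrec_blockList.to_comp.comp (hf.comp ha.to_comp))
  have hdec : ComputablePred fun l => listIndicator l =
      listIndicator ((2 * (firstOdd l / 2) + 1) :: blockList (f (firstOdd l / 2))) :=
    primrecRel_listIndicator_eq.computablePred_comp Computable.id hsupp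
  exact hdec.of_eq fun l => by
    rw [← hA_eq_listIndicator]
    exact listIndicator_mem_hA_iff.symm

theorem Hf_decidable_general (f : ℕ → ℕ) (hf : Computable f) : DecidableClass (Hf f) :=
  decidableClass_hkj.union (decidableClass_hA hf)

/-- For a total computable injective `f : ℕ → ℕ`, the class `𝓗_f`
is decidable: an algorithm decides, given the (finite) support of a finitely supported
`h`, whether `h ∈ 𝓗_f`. -/
theorem Hf_decidable (f : ℕ → ℕ) (hf : Computable f) (hinj : Function.Injective f) :
    DecidableClass (Hf f) :=
  Hf_decidable_general f hf
end

section
/- There exists a decidable hypothesis class 𝓗 ⊆ {0,1}^ℕ consisting only of finitely supported functions with pairwise disjoint supports such that for every k ∈ ℕ, 𝓗 admits no computable k-witness of VC dimension. -/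
/-!
A diagonal construction. To each pair `a = ⟨i, k⟩` of a program `i` and an arity `k` reserve the
increasing probe tuple of the `k + 1` even numbers `2⟨a, j⟩`, `j ≤ k`. If program `i` halts on
its probe tuple, for the first time at stage `t + 1`, with an answer `v`, the class receives the
hypothesis whose support is the odd tag `2⟨a, t⟩ + 1` together with the probe points where `v`
is `1`. Its trace on the probe tuple is `v`, so program `i` is not a `k`-witness. Every point of
such a support encodes `a`, and the first halting stage is unique, so distinct hypotheses have
disjoint supports. A finite set belongs to the class iff one of its elements is a tag
`2⟨a, t⟩ + 1` for which running `a.1` for `t + 1` steps produces exactly that set: a bounded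
search, so the class is decidable.
-/

open Filter
open scoped ENNReal

section PrimrecLemmas

variable {α β : Type*} [Primcodable α] [Primcodable β]

theorem PrimrecPred.exists_mem_option {f : α → Option β} {R : α → β → Prop}
    (hf : Primrec f) (hR : PrimrecRel R) : PrimrecPred fun a => ∃ b ∈ f a, R a b := by
  classical
  refine Primrec.primrecPred (Primrec.of_eq
    (Primrec.option_casesOn hf (Primrec.const false) hR.decide) fun a => ?_)
  rcases f a with _ | b <;> simp

theorem PrimrecRel.list_subset : PrimrecRel ((· ⊆ ·) : List α → List α → Prop) :=
  have mem : PrimrecRel fun (a : α) (l : List α) => a ∈ l :=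
    (Primrec.eq.exists_mem_list.swap).of_eq fun a l => by simp
  (mem.forall_mem_list).of_eq fun l l' => List.subset_def.symm

theorem Computable.exists_code_eval_encode {f : α → β} (hf : Computable f) :
    ∃ c : Nat.Partrec.Code, ∀ a, Nat.Partrec.Code.eval c (Encodable.encode a) =
      Part.some (Encodable.encode (f a)) := by
  obtain ⟨c, hc⟩ := Nat.Partrec.Code.exists_code.1 (Partrec.nat_iff.1 (Computable.ofOption
    (Computable.option_map Computable.decode
      (Computable.encode.comp (hf.comp Computable.snd)).to₂)))
  exact ⟨c, fun a => by simp [hc, Encodable.encodek]⟩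

end PrimrecLemmas

namespace DiagonalClass

open Nat.Partrec (Code)
open Nat.Partrec.Code Encodable Denumerable

def firstHalt (t : ℕ) (c : Code) (n : ℕ) : Option ℕ :=
  if evaln t c n = none then evaln (t + 1) c n else none

theorem exists_firstHalt_eq_some {c : Code} {n r : ℕ} (h : r ∈ eval c n) :
    ∃ t, firstHalt t c n = some r := by
  obtain ⟨s, hs⟩ := evaln_complete.1 h
  induction s with
  | zero => exact absurd (evaln_bound hs) (Nat.not_lt_zero n)
  | succ s ih =>
    rcases hprev : evaln s c n with _ | r'
    · exact ⟨s, by simpa [firstHalt, hprev] using hs⟩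
    · have hr' : r' = r := Option.some_inj.1 ((evaln_mono s.le_succ hprev).symm.trans hs)
      exact ih (hr' ▸ hprev)

theorem eq_of_firstHalt_isSome {c : Code} {n t t' : ℕ} (h : (firstHalt t c n).isSome)
    (h' : (firstHalt t' c n).isSome) : t = t' := by
  by_contra hne
  wlog hlt : t < t' generalizing t t'
  · exact this h' h (Ne.symm hne) (by omega)
  unfold firstHalt at h h'
  split_ifs at h h' with ht ht'
  · obtain ⟨r, hr⟩ := Option.isSome_iff_exists.1 h
    simpa [ht'] using evaln_mono hlt hr
  all_goals simp at h h'

def probePoint (a j : ℕ) : ℕ := 2 * Nat.pair a j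

def tagPoint (a t : ℕ) : ℕ := 2 * Nat.pair a t + 1

theorem unpair_probePoint_div_two (a j : ℕ) : (probePoint a j / 2).unpair = (a, j) := by
  simp [probePoint]

theorem unpair_tagPoint_div_two (a t : ℕ) : (tagPoint a t / 2).unpair = (a, t) := by
  simp [tagPoint, Nat.mul_add_div]

theorem probePoint_injective (a : ℕ) : Function.Injective (probePoint a) := fun j j' h => by
  simpa [unpair_probePoint_div_two] using congrArg (fun x => (x / 2).unpair.2) h

theorem tagPoint_ne_probePoint (a t a' j : ℕ) : tagPoint a t ≠ probePoint a' j := by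
  unfold tagPoint probePoint; omega

def probe (a : ℕ) : List ℕ := (List.range (a.unpair.2 + 1)).map (probePoint a)

theorem length_probe (a : ℕ) : (probe a).length = a.unpair.2 + 1 := by simp [probe]

theorem isChain_probe (a : ℕ) : (probe a).IsChain (· < ·) := by
  rw [probe, List.isChain_map, List.isChain_range_succ]
  intro j _
  have := Nat.pair_lt_pair_right a (Nat.lt_succ_self j)
  unfold probePoint; omega

def diagSupport (a t : ℕ) (v : List Bool) : List ℕ :=
  tagPoint a t :: ((List.range (a.unpair.2 + 1)).filter (v.getD · false)).map (probePoint a)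

theorem probePoint_mem_diagSupport_iff {a t j : ℕ} {v : List Bool} (hj : j < a.unpair.2 + 1) :
    probePoint a j ∈ diagSupport a t v ↔ v.getD j false = true := by
  simp [diagSupport, (tagPoint_ne_probePoint _ _ _ _).symm, (probePoint_injective a).eq_iff,
    Nat.lt_succ_iff.1 hj]

theorem map_listIndicator_diagSupport {a t : ℕ} {v : List Bool} (hv : v.length = a.unpair.2 + 1) :
    (probe a).map (listIndicator (diagSupport a t v)) = v := by
  refine List.ext_getElem (by simp [probe, hv]) fun j hj _ => ?_
  have hj' : j < a.unpair.2 + 1 := by simpa [probe] using hj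
  simp only [probe, List.getElem_map, List.getElem_range, listIndicator,
    probePoint_mem_diagSupport_iff hj', List.getD_eq_getElem v false (hv ▸ hj'),
    Bool.decide_eq_true]

theorem unpair_div_two_fst_of_mem_diagSupport {a t x : ℕ} {v : List Bool}
    (hx : x ∈ diagSupport a t v) : (x / 2).unpair.1 = a := by
  simp only [diagSupport, List.mem_cons, List.mem_map] at hx
  rcases hx with rfl | ⟨j, -, rfl⟩
  · simp [unpair_tagPoint_div_two]
  · simp [unpair_probePoint_div_two]

def supportAt (a t : ℕ) : Option (List ℕ) :=
  (firstHalt t (ofNat Code a.unpair.1) (encode (probe a))).bind fun r =>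
    (decode r).map (diagSupport a t)

theorem firstHalt_isSome_of_mem_supportAt {a t : ℕ} {s : List ℕ} (hs : s ∈ supportAt a t) :
    (firstHalt t (ofNat Code a.unpair.1) (encode (probe a))).isSome := by
  rw [supportAt] at hs
  rcases h : firstHalt t (ofNat Code a.unpair.1) (encode (probe a)) <;> simp_all

theorem exists_eq_diagSupport_of_mem_supportAt {a t : ℕ} {s : List ℕ}
    (hs : s ∈ supportAt a t) : ∃ v, s = diagSupport a t v := by
  simp only [supportAt, Option.mem_def, Option.bind_eq_some_iff, Option.map_eq_some_iff] at hs
  obtain ⟨_, _, v, _, rfl⟩ := hs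
  exact ⟨v, rfl⟩

theorem tagPoint_mem_of_mem_supportAt {a t : ℕ} {s : List ℕ} (hs : s ∈ supportAt a t) :
    tagPoint a t ∈ s := by
  obtain ⟨v, rfl⟩ := exists_eq_diagSupport_of_mem_supportAt hs
  exact List.mem_cons_self

theorem eq_of_mem_supportAt_of_mem {a t a' t' x : ℕ} {s s' : List ℕ} (hs : s ∈ supportAt a t)
    (hs' : s' ∈ supportAt a' t') (hx : x ∈ s) (hx' : x ∈ s') : s = s' := by
  obtain ⟨v, rfl⟩ := exists_eq_diagSupport_of_mem_supportAt hs
  obtain ⟨v', rfl⟩ := exists_eq_diagSupport_of_mem_supportAt hs'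
  obtain rfl : a = a' := (unpair_div_two_fst_of_mem_diagSupport hx).symm.trans
    (unpair_div_two_fst_of_mem_diagSupport hx')
  obtain rfl : t = t' := eq_of_firstHalt_isSome (firstHalt_isSome_of_mem_supportAt hs)
    (firstHalt_isSome_of_mem_supportAt hs')
  exact Option.mem_unique hs hs'

def diagonalClass : Set Hyp := {h | ∃ a t, ∃ s ∈ supportAt a t, h = listIndicator s}

theorem hypSupport_listIndicator (l : List ℕ) : hypSupport (listIndicator l) = {x | x ∈ l} := by
  ext x; simp [hypSupport, listIndicator]

theorem finitelySupported_of_mem_diagonalClass {h : Hyp} (hh : h ∈ diagonalClass) :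
    FinitelySupported h := by
  obtain ⟨_, _, l, _, rfl⟩ := hh
  rw [FinitelySupported, hypSupport_listIndicator]
  exact l.finite_toSet

theorem hypSupport_inter_eq_empty_of_mem_diagonalClass {h h' : Hyp} (hh : h ∈ diagonalClass)
    (hh' : h' ∈ diagonalClass) (hne : h ≠ h') : hypSupport h ∩ hypSupport h' = ∅ := by
  obtain ⟨a, t, s, hs, rfl⟩ := hh
  obtain ⟨a', t', s', hs', rfl⟩ := hh'
  rw [hypSupport_listIndicator, hypSupport_listIndicator, Set.eq_empty_iff_forall_notMem]
  rintro x ⟨hx, hx'⟩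
  exact hne (congrArg listIndicator (eq_of_mem_supportAt_of_mem hs hs' hx hx'))

theorem listIndicator_eq_listIndicator_iff {l l' : List ℕ} :
    listIndicator l = listIndicator l' ↔ l ⊆ l' ∧ l' ⊆ l := by
  simp only [funext_iff, listIndicator, decide_eq_decide, List.subset_def, iff_def, forall_and]

theorem listIndicator_mem_diagonalClass_iff (l : List ℕ) :
    listIndicator l ∈ diagonalClass ↔
      ∃ x ∈ l, ∃ s ∈ supportAt (x / 2).unpair.1 (x / 2).unpair.2, s ⊆ l ∧ l ⊆ s := by
  constructor
  · rintro ⟨a, t, s, hs, hl⟩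
    obtain ⟨hls, hsl⟩ := listIndicator_eq_listIndicator_iff.1 hl
    exact ⟨tagPoint a t, hsl (tagPoint_mem_of_mem_supportAt hs), s,
      by simpa [unpair_tagPoint_div_two] using hs, hsl, hls⟩
  · rintro ⟨x, -, s, hs, hsl, hls⟩
    exact ⟨_, _, s, hs, listIndicator_eq_listIndicator_iff.2 ⟨hls, hsl⟩⟩

section Primrec

open Primrec

theorem primrec_firstHalt : Primrec fun p : (ℕ × Code) × ℕ => firstHalt p.1.1 p.1.2 p.2 :=
  Primrec.ite (Primrec.eq.comp primrec_evaln (const none))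
    (primrec_evaln.comp (((succ.comp (fst.comp fst)).pair (snd.comp fst)).pair snd)) (const none)

theorem primrec₂_probePoint : Primrec₂ probePoint :=
  nat_mul.comp (const 2) Primrec₂.natPair

theorem primrec_probe : Primrec probe :=
  list_map (list_range.comp (succ.comp (snd.comp unpair)))
    (primrec₂_probePoint.comp fst snd).to₂

theorem primrec_diagSupport :
    Primrec fun p : (ℕ × ℕ) × List Bool => diagSupport p.1.1 p.1.2 p.2 := by
  have htag : Primrec fun p : (ℕ × ℕ) × List Bool => tagPoint p.1.1 p.1.2 :=
    succ.comp (primrec₂_probePoint.comp (fst.comp fst) (snd.comp fst))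
  have hbit : PrimrecRel fun (j : ℕ) (v : List Bool) => v.getD j false = true :=
    Primrec.eq.comp ((list_getD false).comp snd fst) (const true)
  have hbits : Primrec fun p : (ℕ × ℕ) × List Bool =>
      (List.range (p.1.1.unpair.2 + 1)).filter (p.2.getD · false) :=
    (hbit.listFilter.comp (list_range.comp (succ.comp (snd.comp (unpair.comp (fst.comp fst)))))
      snd).of_eq fun p => by simp
  exact list_cons.comp htag
    (list_map hbits (primrec₂_probePoint.comp (fst.comp (fst.comp fst)) snd).to₂)

theorem primrec₂_supportAt : Primrec₂ supportAt :=
  option_bind (primrec_firstHalt.comp ((snd.pair ((Primrec.ofNat Code).comp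
      (fst.comp (unpair.comp fst)))).pair (Primrec.encode.comp (primrec_probe.comp fst))))
    (option_map (Primrec.decode.comp snd)
      (primrec_diagSupport.comp ((fst.comp fst).pair snd)).to₂).to₂

theorem primrecPred_listIndicator_mem_diagonalClass :
    PrimrecPred fun l : List ℕ => listIndicator l ∈ diagonalClass := by
  have hsame : PrimrecRel fun (l s : List ℕ) => s ⊆ l ∧ l ⊆ s :=
    (PrimrecRel.list_subset.comp snd fst).and (PrimrecRel.list_subset.comp fst snd)
  have hx : PrimrecRel fun (x : ℕ) (l : List ℕ) =>
      ∃ s ∈ supportAt (x / 2).unpair.1 (x / 2).unpair.2, s ⊆ l ∧ l ⊆ s :=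
    PrimrecPred.exists_mem_option
      (primrec₂_supportAt.comp (fst.comp (unpair.comp (nat_div.comp fst (const 2))))
        (snd.comp (unpair.comp (nat_div.comp fst (const 2)))))
      (hsame.comp (snd.comp fst) snd)
  exact (hx.exists_mem_list.comp Primrec.id Primrec.id).of_eq fun l =>
    (listIndicator_mem_diagonalClass_iff l).symm

end Primrec

theorem decidableClass_diagonalClass : DecidableClass diagonalClass := by
  classical
  exact ⟨fun l => decide (listIndicator l ∈ diagonalClass),
    primrecPred_listIndicator_mem_diagonalClass.decide.to_comp, fun l => decide_eq_true_iff⟩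

theorem not_isKWitness_diagonalClass (k : ℕ) {w : List ℕ → List Bool} (hw : Computable w) :
    ¬ IsKWitness k w diagonalClass := by
  intro hwit
  obtain ⟨c, hc⟩ := hw.exists_code_eval_encode
  set a := Nat.pair (encode c) k
  have hprobe_length : (probe a).length = k + 1 := by simp [length_probe, a]
  obtain ⟨hw_length, hw_avoids⟩ := hwit (probe a) hprobe_length (isChain_probe a)
  obtain ⟨t, ht⟩ := exists_firstHalt_eq_some (Part.eq_some_iff.1 (hc (probe a)))
  have hsupport : diagSupport a t (w (probe a)) ∈ supportAt a t := by
    simp [supportAt, a, ht, encodek]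
  exact hw_avoids _ ⟨a, t, _, hsupport, rfl⟩
    (map_listIndicator_diagSupport (by simpa [a] using hw_length))

end DiagonalClass

/-- There is a decidable class of finitely supported hypotheses with
pairwise disjoint supports admitting no computable `k`-witness of VC dimension for any
`k ∈ ℕ`. -/
theorem exists_disjoint_supports_no_computable_witness :
    ∃ H : Set Hyp, DecidableClass H ∧ (∀ h ∈ H, FinitelySupported h) ∧
      (∀ h ∈ H, ∀ h' ∈ H, h ≠ h' → hypSupport h ∩ hypSupport h' = ∅) ∧
      ∀ k : ℕ, ¬ ∃ w : List ℕ → List Bool, Computable w ∧ IsKWitness k w H :=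
  ⟨DiagonalClass.diagonalClass, DiagonalClass.decidableClass_diagonalClass,
    fun _ => DiagonalClass.finitelySupported_of_mem_diagonalClass,
    fun _ hh _ hh' => DiagonalClass.hypSupport_inter_eq_empty_of_mem_diagonalClass hh hh',
    fun k ⟨_, hw, hwit⟩ => DiagonalClass.not_isKWitness_diagonalClass k hw hwit⟩
end

section
/- Let 𝓗 ⊆ {0,1}^ℕ be a hypothesis class, k ∈ ℕ, and let w be a k-witness of VC dimension for 𝓗. Let 𝓗_good be the set of all good functions with respect to w. Then the VC dimension of 𝓗 ∪ 𝓗_good is at most k+1; in fact, for all x_1 < … < x_{k+2}, no h ∈ 𝓗 ∪ 𝓗_good satisfies (h(x_1),…,h(x_{k+1})) = w(x_1,…,x_{k+1}) and h(x_{k+2}) = 1. -/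
open Filter
open scoped ENNReal

/-! A pattern `w(x₁,…,x_{k+1})` followed by a `1` at `x_{k+2}` is realized by no `h ∈ H`, by the
witness property, and by no good `h`, because `x_{k+2} ∈ supp h` puts `x₁,…,x_{k+1}` below
`max supp h`. A shattered set of `k+2` points would realize exactly this pattern on its elements
in increasing order. -/

theorem Shatters.exists_map_eq {H : Set Hyp} {s : Finset ℕ} (hs : Shatters H s)
    {l : List ℕ} (hnd : l.Nodup) (hls : ∀ x ∈ l, x ∈ s) {v : List Bool}
    (hv : v.length = l.length) : ∃ h ∈ H, l.map h = v := by
  obtain ⟨h, hH, hagree⟩ := hs fun x => v.getD (l.idxOf x) false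
  refine ⟨h, hH, List.ext_getElem (by simp [hv]) fun i hi _ => ?_⟩
  rw [List.getElem_map, hagree _ (hls _ (List.getElem_mem _)), hnd.idxOf_getElem,
    List.getD_eq_getElem]

theorem Finset.exists_isChain_lt_of_le_card {s : Finset ℕ} {n : ℕ} (hn : n ≤ s.card) :
    ∃ l : List ℕ, l.length = n ∧ l.IsChain (· < ·) ∧ ∀ x ∈ l, x ∈ s := by
  refine ⟨(s.sort (· ≤ ·)).take n, by simp [hn], ?_, fun x hx => ?_⟩
  · exact List.isChain_iff_pairwise.mpr
      (s.sortedLT_sort.pairwise.sublist (List.take_sublist _ _))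
  · exact (s.mem_sort _).mp (List.mem_of_mem_take hx)

theorem vcDimAtMost_of_forall_not_map_eq (H : Set Hyp) (k : ℕ) (v : List ℕ → List Bool)
    (hv : ∀ xs : List ℕ, xs.length = k + 1 → xs.IsChain (· < ·) → (v xs).length = k + 1)
    (hH : ∀ (xs : List ℕ) (y : ℕ), xs.length = k + 1 → (xs ++ [y]).IsChain (· < ·) →
      ∀ h ∈ H, ¬ (xs.map h = v xs ∧ h y = true)) :
    VCDimAtMost H (k + 1) := by
  intro s hs
  by_contra! hcard
  obtain ⟨l, hlen, hchain, hls⟩ := Finset.exists_isChain_lt_of_le_card hcard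
  obtain rfl | ⟨xs, y, rfl⟩ := l.eq_nil_or_concat'
  · simp at hlen
  have hxs : xs.length = k + 1 := by simpa using hlen
  have hvxs : (v xs).length = k + 1 := hv xs hxs (List.isChain_append.mp hchain).1
  obtain ⟨h, hmem, hmap⟩ := hs.exists_map_eq (List.isChain_iff_pairwise.mp hchain).nodup hls
    (v := v xs ++ [true]) (by simp [hxs, hvxs])
  rw [List.map_append] at hmap
  obtain ⟨hpat, hy⟩ := List.append_inj' hmap rfl
  exact hH xs y hxs hchain h hmem ⟨hpat, by simpa using hy⟩

theorem IsGood.map_ne_of_forall_lt {k : ℕ} {w : List ℕ → List Bool} {h : Hyp}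
    (hh : IsGood k w h) {xs : List ℕ} {y : ℕ} (hlen : xs.length = k + 1)
    (hxs : xs.IsChain (· < ·)) (hlt : ∀ x ∈ xs, x < y) (hy : h y = true) :
    xs.map h ≠ w xs :=
  hh.2 xs hlen hxs fun x hx => (hlt x hx).trans_le (le_csSup hh.1.bddAbove hy)

theorem not_map_eq_witness_and_of_mem_union {H : Set Hyp} {k : ℕ} {w : List ℕ → List Bool}
    (hw : IsKWitness k w H) (xs : List ℕ) (y : ℕ) (hlen : xs.length = k + 1)
    (hchain : (xs ++ [y]).IsChain (· < ·)) :
    ∀ h ∈ H ∪ Hgood k w, ¬ (xs.map h = w xs ∧ h y = true) := by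
  have hxs : xs.IsChain (· < ·) := (List.isChain_append.mp hchain).1
  have hlt : ∀ x ∈ xs, x < y := fun x hx =>
    (List.pairwise_append.mp (List.isChain_iff_pairwise.mp hchain)).2.2 x hx y
      (List.mem_singleton_self y)
  rintro h (hH | hgood) ⟨hpat, hy⟩
  · exact (hw xs hlen hxs).2 h hH hpat
  · exact (hgood : IsGood k w h).map_ne_of_forall_lt hlen hxs hlt hy hpat

/-- If `w` is a `k`-witness of VC dimension for `H`, then the VC
dimension of `H ∪ 𝓗_good` is at most `k+1`; in fact, for all `x₁ < … < x_{k+2}`, no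
`h ∈ H ∪ 𝓗_good` satisfies `(h(x₁),…,h(x_{k+1})) = w(x₁,…,x_{k+1})` and
`h(x_{k+2}) = 1`. -/
theorem VCdim_union_good_le (H : Set Hyp) (k : ℕ) (w : List ℕ → List Bool)
    (hw : IsKWitness k w H) :
    VCDimAtMost (H ∪ Hgood k w) (k + 1) ∧
    ∀ (xs : List ℕ) (y : ℕ), xs.length = k + 1 → (xs ++ [y]).Chain' (· < ·) →
      ∀ h ∈ H ∪ Hgood k w, ¬ (xs.map h = w xs ∧ h y = true) :=
  ⟨vcDimAtMost_of_forall_not_map_eq _ k w (fun xs hlen hxs => (hw xs hlen hxs).1)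
      (not_map_eq_witness_and_of_mem_union hw),
    not_map_eq_witness_and_of_mem_union hw⟩
end
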